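/- Let s ≥ σ ≥ 0, 0 < ρ ≤ ρ₀ < 1, C > 0, and let N_ρ = ⌊1/ρ - 1⌋. Suppose (m_ℓ)_{ℓ≥0} are real multipliers satisfying |1 - m_ℓ| ≤ C ℓ^s ρ^s for 0 ≤ ℓ ≤ N_ρ and |m_ℓ| ≤ C for ℓ > N_ρ. Then for any coefficient sequence (c_{ℓ,k}) with ∑_{ℓ,k} (1+ℓ)^{2s} |c_{ℓ,k}|² < ∞, one has ∑_{ℓ,k} (1+ℓ)^{2σ} |1 - m_ℓ|² |c_{ℓ,k}|² ≤ C' ρ^{2(s-σ)} ∑_{ℓ,k} (1+ℓ)^{2s} |c_{ℓ,k}|², where C' depends only on C. -/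
import Mathlib

private lemma rp2 (x t : ℝ) (hx : 0 ≤ x) : x ^ (2 * t) = (x ^ t) ^ 2 := by
  rw [mul_comm, Real.rpow_mul hx, show ((2 : ℝ)) = ((2 : ℕ) : ℝ) by norm_num,
    Real.rpow_natCast]

theorem stmt11 (C : ℝ) (hC : 0 < C) :
    ∃ C' > 0, ∀ (s σ ρ ρ₀ : ℝ), 0 ≤ σ → σ ≤ s → 0 < ρ → ρ ≤ ρ₀ → ρ₀ < 1 →
      ∀ (m : ℕ → ℝ) (c : ℕ × ℕ → ℝ),
        (∀ ℓ : ℕ, ℓ ≤ Nat.floor (1 / ρ - 1) → |1 - m ℓ| ≤ C * (ℓ : ℝ) ^ s * ρ ^ s) →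
        (∀ ℓ : ℕ, Nat.floor (1 / ρ - 1) < ℓ → |m ℓ| ≤ C) →
        Summable (fun p : ℕ × ℕ => (1 + (p.1 : ℝ)) ^ (2 * s) * (c p) ^ 2) →
        (∑' p : ℕ × ℕ, (1 + (p.1 : ℝ)) ^ (2 * σ) * (1 - m p.1) ^ 2 * (c p) ^ 2) ≤
          C' * ρ ^ (2 * (s - σ)) *
            ∑' p : ℕ × ℕ, (1 + (p.1 : ℝ)) ^ (2 * s) * (c p) ^ 2 := by
  refine ⟨(1 + C) ^ 2, by positivity, ?_⟩
  intro s σ ρ ρ₀ hσ hσs hρ hρρ₀ hρ₀ m c hm1 hm2 hsum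
  have hρ1 : ρ < 1 := lt_of_le_of_lt hρρ₀ hρ₀
  have hs : 0 ≤ s := le_trans hσ hσs
  have key : ∀ ℓ : ℕ, (1 + (ℓ : ℝ)) ^ (2 * σ) * (1 - m ℓ) ^ 2 ≤
      (1 + C) ^ 2 * ρ ^ (2 * (s - σ)) * (1 + (ℓ : ℝ)) ^ (2 * s) := by
    intro ℓ
    have hx1 : (1 : ℝ) ≤ 1 + (ℓ : ℝ) := le_add_of_nonneg_right (Nat.cast_nonneg ℓ)
    set x : ℝ := 1 + (ℓ : ℝ) with hxdef
    have hx0 : (0 : ℝ) < x := lt_of_lt_of_le one_pos hx1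
    set a := x ^ σ with hadef
    set b := x ^ (s - σ) with hbdef
    set r := ρ ^ σ with hrdef
    set q := ρ ^ (s - σ) with hqdef
    have ha : 0 ≤ a := Real.rpow_nonneg hx0.le _
    have hb : 0 ≤ b := Real.rpow_nonneg hx0.le _
    have hr : 0 ≤ r := Real.rpow_nonneg hρ.le _
    have hq : 0 ≤ q := Real.rpow_nonneg hρ.le _
    have exs : x ^ s = a * b := by
      rw [hadef, hbdef, ← Real.rpow_add hx0]; ring_nf
    have eρs : ρ ^ s = r * q := by
      rw [hrdef, hqdef, ← Real.rpow_add hρ]; ring_nf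
    have ex2σ : x ^ (2 * σ) = a ^ 2 := rp2 x σ hx0.le
    have ex2s : x ^ (2 * s) = (a * b) ^ 2 := by rw [rp2 x s hx0.le, exs]
    have eq2 : ρ ^ (2 * (s - σ)) = q ^ 2 := rp2 ρ (s - σ) hρ.le
    rw [ex2σ, ex2s, eq2]
    by_cases hℓ : ℓ ≤ Nat.floor (1 / ρ - 1)
    · have h1ρ : (1 : ℝ) ≤ 1 / ρ := by rw [le_div_iff₀ hρ]; linarith
      have hfl0 : (0 : ℝ) ≤ 1 / ρ - 1 := by linarith
      have hℓle : (ℓ : ℝ) ≤ 1 / ρ - 1 :=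
        le_trans (by exact_mod_cast Nat.cast_le.2 hℓ) (Nat.floor_le hfl0)
      have hxle : x ≤ 1 / ρ := by rw [hxdef]; linarith
      have hxρ : x * ρ ≤ 1 := by
        calc x * ρ ≤ (1 / ρ) * ρ := mul_le_mul_of_nonneg_right hxle hρ.le
          _ = 1 := by field_simp
      have har : a * r ≤ 1 := by
        have h := Real.rpow_le_one (by positivity) hxρ hσ
        rwa [Real.mul_rpow hx0.le hρ.le] at h
      have hb1 : |1 - m ℓ| ≤ C * (a * b) * (r * q) := by
        refine (hm1 ℓ hℓ).trans ?_
        rw [← exs, ← eρs]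
        have hpow : (ℓ : ℝ) ^ s ≤ x ^ s :=
          Real.rpow_le_rpow (Nat.cast_nonneg ℓ) (by rw [hxdef]; linarith) hs
        exact mul_le_mul_of_nonneg_right
          (mul_le_mul_of_nonneg_left hpow hC.le) (Real.rpow_nonneg hρ.le s)
      have hsq : (1 - m ℓ) ^ 2 ≤ (C * (a * b) * (r * q)) ^ 2 := by
        rw [← sq_abs (1 - m ℓ)]
        exact pow_le_pow_left₀ (abs_nonneg _) hb1 2
      have hstep : a ^ 2 * (1 - m ℓ) ^ 2 ≤ a ^ 2 * (C * (a * b) * (r * q)) ^ 2 :=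
        mul_le_mul_of_nonneg_left hsq (by positivity)
      refine hstep.trans ?_
      have e : a ^ 2 * (C * (a * b) * (r * q)) ^ 2 =
          (C ^ 2 * (a * r) ^ 2) * ((a * b) ^ 2 * q ^ 2) := by ring
      rw [e]
      have har2 : (a * r) ^ 2 ≤ 1 := pow_le_one₀ (mul_nonneg ha hr) har
      have h1 : C ^ 2 * (a * r) ^ 2 ≤ (1 + C) ^ 2 := by
        calc C ^ 2 * (a * r) ^ 2 ≤ C ^ 2 * 1 :=
              mul_le_mul_of_nonneg_left har2 (sq_nonneg C)
          _ = C ^ 2 := mul_one _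
          _ ≤ (1 + C) ^ 2 := by nlinarith [sq_nonneg C]
      calc (C ^ 2 * (a * r) ^ 2) * ((a * b) ^ 2 * q ^ 2)
          ≤ (1 + C) ^ 2 * ((a * b) ^ 2 * q ^ 2) :=
            mul_le_mul_of_nonneg_right h1 (by positivity)
        _ = (1 + C) ^ 2 * q ^ 2 * (a * b) ^ 2 := by ring
    · push_neg at hℓ
      have hmb : |m ℓ| ≤ C := hm2 ℓ hℓ
      have h1m : |1 - m ℓ| ≤ 1 + C := by
        calc |1 - m ℓ| ≤ |(1 : ℝ)| + |m ℓ| := abs_sub _ _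
          _ ≤ 1 + C := by rw [abs_one]; linarith
      have hflℓ : (1 / ρ - 1 : ℝ) < (ℓ : ℝ) := by
        have h1 := Nat.lt_floor_add_one (1 / ρ - 1)
        have h2 : (Nat.floor (1 / ρ - 1) : ℝ) + 1 ≤ (ℓ : ℝ) := by
          exact_mod_cast Nat.succ_le_of_lt hℓ
        linarith
      have hxρ1 : 1 ≤ x * ρ := by
        have hx : 1 / ρ ≤ x := by rw [hxdef]; linarith
        calc (1 : ℝ) = (1 / ρ) * ρ := by field_simp
          _ ≤ x * ρ := mul_le_mul_of_nonneg_right hx hρ.le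
      have hbr : 1 ≤ b * q := by
        have h := Real.rpow_le_rpow zero_le_one hxρ1 (by linarith : 0 ≤ s - σ)
        rwa [Real.one_rpow, Real.mul_rpow hx0.le hρ.le] at h
      have hsq : (1 - m ℓ) ^ 2 ≤ (1 + C) ^ 2 := by
        rw [← sq_abs (1 - m ℓ)]
        exact pow_le_pow_left₀ (abs_nonneg _) h1m 2
      have hstep : a ^ 2 * (1 - m ℓ) ^ 2 ≤ a ^ 2 * (1 + C) ^ 2 :=
        mul_le_mul_of_nonneg_left hsq (by positivity)
      refine hstep.trans ?_
      have h2 : (1 : ℝ) ≤ (b * q) ^ 2 := one_le_pow₀ hbr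
      calc a ^ 2 * (1 + C) ^ 2 = (1 + C) ^ 2 * a ^ 2 * 1 := by ring
        _ ≤ (1 + C) ^ 2 * a ^ 2 * (b * q) ^ 2 :=
            mul_le_mul_of_nonneg_left h2 (by positivity)
        _ = (1 + C) ^ 2 * q ^ 2 * (a * b) ^ 2 := by ring
  have hle : ∀ p : ℕ × ℕ, (1 + (p.1 : ℝ)) ^ (2 * σ) * (1 - m p.1) ^ 2 * (c p) ^ 2 ≤
      ((1 + C) ^ 2 * ρ ^ (2 * (s - σ))) * ((1 + (p.1 : ℝ)) ^ (2 * s) * (c p) ^ 2) := by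
    intro p
    have h := mul_le_mul_of_nonneg_right (key p.1) (sq_nonneg (c p))
    calc (1 + (p.1 : ℝ)) ^ (2 * σ) * (1 - m p.1) ^ 2 * (c p) ^ 2 ≤
        (1 + C) ^ 2 * ρ ^ (2 * (s - σ)) * (1 + (p.1 : ℝ)) ^ (2 * s) * (c p) ^ 2 := h
      _ = ((1 + C) ^ 2 * ρ ^ (2 * (s - σ))) * ((1 + (p.1 : ℝ)) ^ (2 * s) * (c p) ^ 2) := by
          ring
  have hsum2 : Summable (fun p : ℕ × ℕ =>
      ((1 + C) ^ 2 * ρ ^ (2 * (s - σ))) * ((1 + (p.1 : ℝ)) ^ (2 * s) * (c p) ^ 2)) :=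
    hsum.mul_left _
  have hsumL : Summable (fun p : ℕ × ℕ =>
      (1 + (p.1 : ℝ)) ^ (2 * σ) * (1 - m p.1) ^ 2 * (c p) ^ 2) :=
    Summable.of_nonneg_of_le (fun p => by positivity) hle hsum2
  calc (∑' p : ℕ × ℕ, (1 + (p.1 : ℝ)) ^ (2 * σ) * (1 - m p.1) ^ 2 * (c p) ^ 2) ≤
      ∑' p : ℕ × ℕ, ((1 + C) ^ 2 * ρ ^ (2 * (s - σ))) *
        ((1 + (p.1 : ℝ)) ^ (2 * s) * (c p) ^ 2) := Summable.tsum_le_tsum hle hsumL hsum2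
    _ = ((1 + C) ^ 2 * ρ ^ (2 * (s - σ))) *
        ∑' p : ℕ × ℕ, (1 + (p.1 : ℝ)) ^ (2 * s) * (c p) ^ 2 := tsum_mul_left
    _ = (1 + C) ^ 2 * ρ ^ (2 * (s - σ)) *
        ∑' p : ℕ × ℕ, (1 + (p.1 : ℝ)) ^ (2 * s) * (c p) ^ 2 := by ring
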